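/- arXiv:2105.09718 — 2 statements merged into one kernel-verified Lean document; each statement's English description precedes it below -/
import Mathlib

section
/- Let B, C ∈ B(H). Then w([[0, B], [C, 0]])² ≥ (1/4)·max{ ‖|B|² + |C*|²‖, ‖|B*|² + |C|²‖ } + (1/8)·| ‖B + C*‖² − ‖B − C*‖² |. -/
open ContinuousLinearMap

variable {H : Type*} [NormedAddCommGroup H] [InnerProductSpace ℂ H] [CompleteSpace H]

/-- The numerical radius of a bounded linear operator:
`w(T) = sup { |⟨Tx, x⟩| : ‖x‖ = 1 }`. -/
noncomputable def numRadius {E : Type*} [NormedAddCommGroup E] [InnerProductSpace ℂ E]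
    (T : E →L[ℂ] E) : ℝ :=
  sSup {r : ℝ | ∃ x : E, ‖x‖ = 1 ∧ r = ‖(inner ℂ (T x) x : ℂ)‖}

/-- The absolute value `|T| = (T*T)^(1/2)` of a bounded linear operator.
Note `opAbs (adjoint T) = (T T*)^(1/2) = |T*|`. -/
noncomputable def opAbs (T : H →L[ℂ] H) : H →L[ℂ] H := CFC.sqrt (adjoint T * T)

/-- The off-diagonal operator matrix `[[0, B], [C, 0]]` acting on `H ⊕ H`
(with the Hilbert space structure `WithLp 2 (H × H)`) by `(x₁, x₂) ↦ (B x₂, C x₁)`. -/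
noncomputable def offDiag (B C : H →L[ℂ] H) :
    WithLp 2 (H × H) →L[ℂ] WithLp 2 (H × H) :=
  ((WithLp.prodContinuousLinearEquiv 2 ℂ H H).symm : (H × H) →L[ℂ] WithLp 2 (H × H)).comp
    (((B.comp (ContinuousLinearMap.snd ℂ H H)).prod
        (C.comp (ContinuousLinearMap.fst ℂ H H))).comp
      ((WithLp.prodContinuousLinearEquiv 2 ℂ H H) : WithLp 2 (H × H) →L[ℂ] H × H))

/-! For unit vectors `u, v` and `‖k‖ = 1`, testing the numerical radius of `T = [[0, B], [C, 0]]`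
on `(k • u, v)` gives `‖k ⟪B v, u⟫ + conj (k ⟪C* v, u⟫)‖ ≤ 2 w(T)`. Choosing the phase `k` to
maximise the real, resp. imaginary, part yields `‖B + C*‖ ≤ 2 w(T)` and `‖B - C*‖ ≤ 2 w(T)`.
By the parallelogram identity `(B + C*)*(B + C*) + (B - C*)*(B - C*) = 2 (|B|² + |C*|²)` and the
C*-identity, `‖|B|² + |C*|²‖` and `‖|B*|² + |C|²‖` are at most `(‖B + C*‖² + ‖B - C*‖²) / 2`, and
`(x² + y²) / 8 + |x² - y²| / 8 = max x² y² / 4`. -/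

open scoped InnerProductSpace ComplexConjugate

namespace Complex

lemma norm_le_of_forall_re_mul_le {z : ℂ} {M : ℝ} (h : ∀ k : ℂ, ‖k‖ = 1 → (k * z).re ≤ M) :
    ‖z‖ ≤ M := by
  have hk : ‖exp (↑(-arg z) * I)‖ = 1 := norm_exp_ofReal_mul_I _
  have hkz : exp (↑(-arg z) * I) * z = ‖z‖ := by
    conv_lhs => rw [← norm_mul_exp_arg_mul_I z]
    rw [mul_left_comm, ← exp_add]
    simp
  have := h _ hk
  rwa [hkz, ofReal_re] at this

lemma norm_le_of_forall_im_mul_le {z : ℂ} {M : ℝ} (h : ∀ k : ℂ, ‖k‖ = 1 → (k * z).im ≤ M) :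
    ‖z‖ ≤ M :=
  norm_le_of_forall_re_mul_le fun k hk => by simpa [mul_assoc] using h (I * k) (by simp [hk])

lemma norm_add_le_of_forall_norm_mul_add_conj_mul_le {α β : ℂ} {M : ℝ}
    (h : ∀ k : ℂ, ‖k‖ = 1 → ‖k * α + conj (k * β)‖ ≤ M) : ‖α + β‖ ≤ M :=
  norm_le_of_forall_re_mul_le fun k hk => by
    have hkre := (re_le_norm _).trans (h k hk)
    rwa [add_re, conj_re, ← add_re, ← mul_add] at hkre

lemma norm_sub_le_of_forall_norm_mul_add_conj_mul_le {α β : ℂ} {M : ℝ}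
    (h : ∀ k : ℂ, ‖k‖ = 1 → ‖k * α + conj (k * β)‖ ≤ M) : ‖α - β‖ ≤ M :=
  norm_le_of_forall_im_mul_le fun k hk => by
    have hkim := (im_le_norm _).trans (h k hk)
    rwa [add_im, conj_im, ← sub_eq_add_neg, ← sub_im, ← mul_sub] at hkim

end Complex

section InnerProduct

variable {𝕜 E F : Type*} [RCLike 𝕜] [NormedAddCommGroup E] [InnerProductSpace 𝕜 E]
  [NormedAddCommGroup F] [InnerProductSpace 𝕜 F]

lemma ContinuousLinearMap.opNorm_le_of_unit_inner {D : E →L[𝕜] F} {M : ℝ} (hM : 0 ≤ M)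
    (h : ∀ u v, ‖u‖ = 1 → ‖v‖ = 1 → ‖⟪D v, u⟫_𝕜‖ ≤ M) : ‖D‖ ≤ M :=
  D.opNorm_le_of_unit_norm hM fun v hv => by
    rw [← innerSL_apply_norm 𝕜 (D v)]
    exact (innerSL 𝕜 (D v)).opNorm_le_of_unit_norm hM fun u hu => h u v hu hv

end InnerProduct

section NumRadius

variable {E : Type*} [NormedAddCommGroup E] [InnerProductSpace ℂ E]

lemma numRadius_nonneg (T : E →L[ℂ] E) : 0 ≤ numRadius T :=
  Real.sSup_nonneg fun _ ⟨_, _, hr⟩ => hr ▸ norm_nonneg _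

lemma norm_inner_le_numRadius (T : E →L[ℂ] E) {x : E} (hx : ‖x‖ = 1) :
    ‖⟪T x, x⟫_ℂ‖ ≤ numRadius T := by
  refine le_csSup ⟨‖T‖, ?_⟩ ⟨x, hx, rfl⟩
  rintro _ ⟨y, hy, rfl⟩
  simpa [hy] using norm_inner_le_norm (T y) y |>.trans
    (mul_le_mul_of_nonneg_right (T.le_opNorm y) (norm_nonneg y))

lemma norm_inner_le_numRadius_mul_sq (T : E →L[ℂ] E) (x : E) :
    ‖⟪T x, x⟫_ℂ‖ ≤ numRadius T * ‖x‖ ^ 2 := by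
  rcases eq_or_ne x 0 with rfl | hx
  · simp
  have hx' : ‖x‖ ≠ 0 := norm_ne_zero_iff.2 hx
  have h := norm_inner_le_numRadius T (x := ((‖x‖⁻¹ : ℝ) : ℂ) • x) (by simp [norm_smul, hx'])
  rw [map_smul, inner_smul_left, inner_smul_right, norm_mul, norm_mul] at h
  simp only [Complex.conj_ofReal, Complex.norm_real, norm_inv, norm_norm] at h
  rwa [← mul_assoc, ← mul_inv, ← sq, inv_mul_le_iff₀ (by positivity), mul_comm] at h

end NumRadius

section CStarRing

variable {A : Type*} [NonUnitalNormedRing A] [StarRing A] [CStarRing A] [NormedSpace ℝ A]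

lemma two_mul_norm_star_mul_self_add_le (a b : A) :
    2 * ‖star a * a + star b * b‖ ≤ ‖a + b‖ ^ 2 + ‖a - b‖ ^ 2 := by
  have parallelogram : star (a + b) * (a + b) + star (a - b) * (a - b)
      = (2 : ℝ) • (star a * a + star b * b) := by
    rw [star_add, star_sub, two_smul]
    noncomm_ring
  have h := norm_add_le (star (a + b) * (a + b)) (star (a - b) * (a - b))
  rw [parallelogram, norm_smul, CStarRing.norm_star_mul_self, CStarRing.norm_star_mul_self] at h
  simpa [sq] using h

lemma two_mul_norm_mul_star_self_add_le (a b : A) :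
    2 * ‖a * star a + b * star b‖ ≤ ‖a + b‖ ^ 2 + ‖a - b‖ ^ 2 := by
  simpa [← star_add, ← star_sub, norm_star] using two_mul_norm_star_mul_self_add_le (star a) (star b)

end CStarRing

lemma opAbs_sq (T : H →L[ℂ] H) : opAbs T ^ 2 = adjoint T * T :=
  CFC.sq_sqrt _ (by simpa [ContinuousLinearMap.star_eq_adjoint] using star_mul_self_nonneg T)

omit [CompleteSpace H] in
lemma inner_offDiag_toLp (B C : H →L[ℂ] H) (p q : H) :
    ⟪offDiag B C (WithLp.toLp 2 (p, q)), WithLp.toLp 2 (p, q)⟫_ℂ = ⟪B q, p⟫_ℂ + ⟪C p, q⟫_ℂ := by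
  simp [offDiag, WithLp.prod_inner_apply]

lemma norm_mul_inner_add_conj_le_two_mul_numRadius_offDiag (B C : H →L[ℂ] H) {u v : H}
    (hu : ‖u‖ = 1) (hv : ‖v‖ = 1) {k : ℂ} (hk : ‖k‖ = 1) :
    ‖k * ⟪B v, u⟫_ℂ + conj (k * ⟪adjoint C v, u⟫_ℂ)‖ ≤ 2 * numRadius (offDiag B C) := by
  have h := norm_inner_le_numRadius_mul_sq (offDiag B C) (WithLp.toLp 2 (k • u, v))
  rw [inner_offDiag_toLp, WithLp.prod_norm_sq_eq_of_L2] at h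
  simpa [inner_smul_left, inner_smul_right, ContinuousLinearMap.adjoint_inner_left, hu, hv, hk,
    norm_smul, mul_comm, one_add_one_eq_two] using h

lemma norm_add_adjoint_le_two_mul_numRadius_offDiag (B C : H →L[ℂ] H) :
    ‖B + adjoint C‖ ≤ 2 * numRadius (offDiag B C) :=
  opNorm_le_of_unit_inner (mul_nonneg zero_le_two (numRadius_nonneg _)) fun u v hu hv => by
    rw [add_apply, inner_add_left]
    exact Complex.norm_add_le_of_forall_norm_mul_add_conj_mul_le fun k hk =>
      norm_mul_inner_add_conj_le_two_mul_numRadius_offDiag B C hu hv hk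

lemma norm_sub_adjoint_le_two_mul_numRadius_offDiag (B C : H →L[ℂ] H) :
    ‖B - adjoint C‖ ≤ 2 * numRadius (offDiag B C) :=
  opNorm_le_of_unit_inner (mul_nonneg zero_le_two (numRadius_nonneg _)) fun u v hu hv => by
    rw [sub_apply, inner_sub_left]
    exact Complex.norm_sub_le_of_forall_norm_mul_add_conj_mul_le fun k hk =>
      norm_mul_inner_add_conj_le_two_mul_numRadius_offDiag B C hu hv hk

theorem stmt_5 (B C : H →L[ℂ] H) :
    (1 / 4) * max ‖opAbs B ^ 2 + opAbs (adjoint C) ^ 2‖ ‖opAbs (adjoint B) ^ 2 + opAbs C ^ 2‖ +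
        (1 / 8) * |‖B + adjoint C‖ ^ 2 - ‖B - adjoint C‖ ^ 2| ≤
      numRadius (offDiag B C) ^ 2 := by
  have hadd := pow_le_pow_left₀ (norm_nonneg _) (norm_add_adjoint_le_two_mul_numRadius_offDiag B C) 2
  have hsub := pow_le_pow_left₀ (norm_nonneg _) (norm_sub_adjoint_le_two_mul_numRadius_offDiag B C) 2
  have h₁ := two_mul_norm_star_mul_self_add_le B (adjoint C)
  have h₂ := two_mul_norm_mul_star_self_add_le B (adjoint C)
  rw [ContinuousLinearMap.star_eq_adjoint, ContinuousLinearMap.star_eq_adjoint,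
    ContinuousLinearMap.adjoint_adjoint] at h₁ h₂
  rw [opAbs_sq, opAbs_sq, opAbs_sq, opAbs_sq, ContinuousLinearMap.adjoint_adjoint,
    ContinuousLinearMap.adjoint_adjoint]
  have hmax : max ‖adjoint B * B + C * adjoint C‖ ‖B * adjoint B + adjoint C * C‖
      ≤ (‖B + adjoint C‖ ^ 2 + ‖B - adjoint C‖ ^ 2) / 2 :=
    max_le (by linarith) (by linarith)
  rcases abs_cases (‖B + adjoint C‖ ^ 2 - ‖B - adjoint C‖ ^ 2) with ⟨h, _⟩ | ⟨h, _⟩ <;> rw [h] <;>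
    linarith
end

section
/- Let B, C ∈ B(H). If |B||C*| = 0 and |B*||C| = 0, then w([[0, B], [C, 0]])² = (1/4)·max{ ‖|B|² + |C*|²‖, ‖|B*|² + |C|²‖ }. -/
/-!
The hypotheses only involve polar parts, and in a C⋆-algebra `‖a * b‖ = ‖|a| * |b*|‖`; so they
say exactly `B * C = 0` and `C * B = 0`. Hence `T = [[0, B], [C, 0]]` squares to zero, and for
such `T` one has `w(T) = ‖T‖ / 2`: the bound `‖T‖ ≤ 2 w(T)` holds for every operator by
polarization, and the reverse one comes from splitting a vector along the line through `T x`,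
which `T` annihilates. Finally `‖T‖ = max ‖B‖ ‖C‖`, while `B*B`, `CC*` (and `BB*`, `C*C`) are
positive with zero product, so the norm of either sum is `(max ‖B‖ ‖C‖)²`.
-/

open ContinuousLinearMap

variable {H : Type*} [NormedAddCommGroup H] [InnerProductSpace ℂ H] [CompleteSpace H]

section CStarAlgebra

variable {A : Type*} [NonUnitalCStarAlgebra A]

lemma norm_star_mul_self_add_mul_star_self {a b : A} (h : a * b = 0) :
    ‖star a * a + b * star b‖ = max ‖a‖ ‖b‖ ^ 2 := by
  have hab : star a * a * (b * star b) = 0 := by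
    rw [mul_assoc, ← mul_assoc a, h, zero_mul, mul_zero]
  rw [(IsSelfAdjoint.star_mul_self a).norm_add_eq_max (IsSelfAdjoint.mul_star_self b) hab,
    CStarRing.norm_star_mul_self, CStarRing.norm_self_mul_star, ← sq, ← sq]
  exact (pow_left_monotoneOn.map_max (norm_nonneg a) (norm_nonneg b)).symm

variable [PartialOrder A] [StarOrderedRing A]

lemma norm_abs_mul (a c : A) : ‖CFC.abs a * c‖ = ‖a * c‖ := by
  rw [← sq_eq_sq₀ (norm_nonneg _) (norm_nonneg _), sq, sq, ← CStarRing.norm_star_mul_self,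
    ← CStarRing.norm_star_mul_self, star_mul, star_mul, (CFC.abs_nonneg a).star_eq,
    mul_assoc, ← mul_assoc (CFC.abs a), CFC.abs_mul_abs]
  simp only [mul_assoc]

lemma norm_mul_abs_star (c b : A) : ‖c * CFC.abs (star b)‖ = ‖c * b‖ := by
  rw [← norm_star, star_mul, (CFC.abs_nonneg _).star_eq, norm_abs_mul, ← star_mul, norm_star]

lemma norm_mul_eq_norm_abs_mul_abs_star (a b : A) :
    ‖a * b‖ = ‖CFC.abs a * CFC.abs (star b)‖ := by
  rw [norm_mul_abs_star, norm_abs_mul]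

end CStarAlgebra

section NumRadius

variable {E : Type*} [NormedAddCommGroup E] [InnerProductSpace ℂ E]

lemma bddAbove_numRange (T : E →L[ℂ] E) :
    BddAbove {r : ℝ | ∃ x : E, ‖x‖ = 1 ∧ r = ‖(inner ℂ (T x) x : ℂ)‖} := by
  refine ⟨‖T‖, ?_⟩
  rintro _ ⟨x, hx, rfl⟩
  simpa [hx] using (norm_inner_le_norm (𝕜 := ℂ) (T x) x).trans
    (mul_le_mul_of_nonneg_right (T.le_opNorm x) (norm_nonneg x))

lemma norm_inner_self_le_numRadius_mul_sq (T : E →L[ℂ] E) (x : E) :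
    ‖(inner ℂ (T x) x : ℂ)‖ ≤ numRadius T * ‖x‖ ^ 2 := by
  rcases eq_or_ne x 0 with rfl | hx
  · simp
  have hx' : (0 : ℝ) < ‖x‖ := norm_pos_iff.mpr hx
  set u : E := ((‖x‖⁻¹ : ℝ) : ℂ) • x
  have hu : ‖u‖ = 1 := by simp [u, norm_smul, hx'.ne']
  have hmem : ‖(inner ℂ (T u) u : ℂ)‖ ≤ numRadius T :=
    le_csSup (bddAbove_numRange T) ⟨u, hu, rfl⟩
  have hscale : ‖(inner ℂ (T u) u : ℂ)‖ = ‖(inner ℂ (T x) x : ℂ)‖ / ‖x‖ ^ 2 := by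
    simp [u, div_eq_inv_mul, sq, mul_assoc]
  rwa [hscale, div_le_iff₀ (by positivity)] at hmem

/-- Polarization: `4⟪T y, x⟫` is a combination of four values of the quadratic form of `T`. -/
lemma norm_inner_le_numRadius_mul (T : E →L[ℂ] E) (x y : E) :
    ‖(inner ℂ (T y) x : ℂ)‖ ≤ numRadius T * (‖x‖ ^ 2 + ‖y‖ ^ 2) := by
  have hw := norm_inner_self_le_numRadius_mul_sq T
  have hpar := parallelogram_law_with_norm ℂ x y
  have hparI := parallelogram_law_with_norm ℂ x (Complex.I • y)
  rw [norm_smul, Complex.norm_I, one_mul] at hparI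
  rw [show (inner ℂ (T y) x : ℂ) = _ from inner_map_polarization (T : E →ₗ[ℂ] E) x y]
  simp only [ContinuousLinearMap.coe_coe]
  rw [norm_div, Complex.norm_ofNat, div_le_iff₀ (by norm_num)]
  calc _ ≤ ‖(inner ℂ (T (x + y)) (x + y) : ℂ)‖ + ‖(inner ℂ (T (x - y)) (x - y) : ℂ)‖ +
        ‖(inner ℂ (T (x + Complex.I • y)) (x + Complex.I • y) : ℂ)‖ +
        ‖(inner ℂ (T (x - Complex.I • y)) (x - Complex.I • y) : ℂ)‖ := by
          refine (norm_sub_le _ _).trans (add_le_add ((norm_add_le _ _).trans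
            (add_le_add (norm_sub_le _ _) ?_)) ?_) <;>
            rw [norm_mul, Complex.norm_I, one_mul]
    _ ≤ numRadius T * (‖x + y‖ ^ 2 + ‖x - y‖ ^ 2 + ‖x + Complex.I • y‖ ^ 2 +
        ‖x - Complex.I • y‖ ^ 2) := by
          rw [mul_add, mul_add, mul_add]
          gcongr <;> apply hw
    _ = numRadius T * (‖x‖ ^ 2 + ‖y‖ ^ 2) * 4 := by
          rw [add_assoc _ (‖x + Complex.I • y‖ ^ 2), hpar, hparI]; ring

lemma opNorm_le_two_mul_numRadius (T : E →L[ℂ] E) : ‖T‖ ≤ 2 * numRadius T := by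
  have hw : 0 ≤ numRadius T := Real.sSup_nonneg (by rintro _ ⟨x, -, rfl⟩; positivity)
  refine T.opNorm_le_of_unit_norm (by positivity) fun y hy => ?_
  rcases eq_or_ne (T y) 0 with hTy | hTy
  · simp [hTy, hw]
  have hTy' : (0 : ℝ) < ‖T y‖ := norm_pos_iff.mpr hTy
  set z : E := ((‖T y‖⁻¹ : ℝ) : ℂ) • T y
  have hz : ‖z‖ = 1 := by simp [z, norm_smul, hTy'.ne']
  have hinner : ‖(inner ℂ (T y) z : ℂ)‖ = ‖T y‖ := by
    simp [z, sq, hTy'.ne']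
  have key := norm_inner_le_numRadius_mul T z y
  rw [hinner, hz, hy] at key
  linarith

/-- Split `x` along the line through `T x`: `T` kills that line, and `T x` is orthogonal to the
other component, so only a cross term `⟪T v, u⟫` with `‖u‖ ^ 2 + ‖v‖ ^ 2 = ‖x‖ ^ 2` survives. -/
lemma norm_inner_self_le_of_mul_self_eq_zero {T : E →L[ℂ] E} (hT : T * T = 0) (x : E) :
    ‖(inner ℂ (T x) x : ℂ)‖ ≤ ‖T‖ / 2 * ‖x‖ ^ 2 := by
  set K : Submodule ℂ E := ℂ ∙ T x
  set u := K.starProjection x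
  set v := x - u
  have huK : u ∈ K := K.starProjection_apply_mem x
  have hvK : v ∈ Kᗮ := K.sub_starProjection_mem_orthogonal x
  have hTu : T u = 0 := by
    obtain ⟨c, hc⟩ := Submodule.mem_span_singleton.mp huK
    rw [← hc, map_smul, show T (T x) = 0 from congr($hT x), smul_zero]
  have hTv : T v = T x := by rw [map_sub, hTu, sub_zero]
  have hxuv : u + v = x := add_sub_cancel u x
  have hpyth : ‖x‖ ^ 2 = ‖u‖ ^ 2 + ‖v‖ ^ 2 := by
    rw [← hxuv, sq, sq, sq, norm_add_sq_eq_norm_sq_add_norm_sq_of_inner_eq_zero u v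
      (Submodule.inner_right_of_mem_orthogonal huK hvK)]
  calc ‖(inner ℂ (T x) x : ℂ)‖ = ‖(inner ℂ (T v) u : ℂ)‖ := by
        rw [hTv]
        nth_rw 2 [← hxuv]
        rw [inner_add_right, Submodule.inner_right_of_mem_orthogonal
          (Submodule.mem_span_singleton_self (T x)) hvK, add_zero]
    _ ≤ ‖T v‖ * ‖u‖ := norm_inner_le_norm _ _
    _ ≤ ‖T‖ * ‖v‖ * ‖u‖ := by gcongr; exact T.le_opNorm v
    _ ≤ ‖T‖ / 2 * ‖x‖ ^ 2 := by
        rw [hpyth]; nlinarith [sq_nonneg (‖u‖ - ‖v‖), norm_nonneg T]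

lemma numRadius_eq_half_opNorm_of_mul_self_eq_zero {T : E →L[ℂ] E} (hT : T * T = 0) :
    numRadius T = ‖T‖ / 2 := by
  refine le_antisymm (Real.sSup_le ?_ (by positivity)) (by linarith [opNorm_le_two_mul_numRadius T])
  rintro _ ⟨x, hx, rfl⟩
  simpa [hx] using norm_inner_self_le_of_mul_self_eq_zero hT x

end NumRadius

section OffDiag

variable {E : Type*} [NormedAddCommGroup E] [InnerProductSpace ℂ E]

@[simp]
lemma offDiag_apply_fst (B C : E →L[ℂ] E) (x : WithLp 2 (E × E)) :
    (offDiag B C x).fst = B x.snd := rfl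

@[simp]
lemma offDiag_apply_snd (B C : E →L[ℂ] E) (x : WithLp 2 (E × E)) :
    (offDiag B C x).snd = C x.fst := rfl

lemma offDiag_mul_self {B C : E →L[ℂ] E} (hBC : B * C = 0) (hCB : C * B = 0) :
    offDiag B C * offDiag B C = 0 := by
  ext x : 1
  rw [WithLp.ext_iff]
  refine Prod.ext ?_ ?_
  · exact congr($hBC x.fst)
  · exact congr($hCB x.snd)

lemma norm_offDiag (B C : E →L[ℂ] E) : ‖offDiag B C‖ = max ‖B‖ ‖C‖ := by
  refine le_antisymm (opNorm_le_bound _ (by positivity) fun x => ?_) (max_le ?_ ?_)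
  · rw [← sq_le_sq₀ (norm_nonneg _) (by positivity), mul_pow, WithLp.prod_norm_sq_eq_of_L2,
      WithLp.prod_norm_sq_eq_of_L2, offDiag_apply_fst, offDiag_apply_snd, mul_add, add_comm]
    gcongr
    · rw [← mul_pow]; gcongr; exact C.le_of_opNorm_le (le_max_right _ _) _
    · rw [← mul_pow]; gcongr; exact B.le_of_opNorm_le (le_max_left _ _) _
  · refine B.opNorm_le_bound (offDiag B C).opNorm_nonneg fun y => ?_
    calc ‖B y‖ = ‖(offDiag B C (WithLp.toLp 2 (0, y))).fst‖ := rfl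
      _ ≤ ‖offDiag B C (WithLp.toLp 2 (0, y))‖ := by apply WithLp.norm_fst_le
      _ ≤ ‖offDiag B C‖ * ‖y‖ := by
        simpa only [WithLp.norm_toLp_snd] using (offDiag B C).le_opNorm (WithLp.toLp 2 (0, y))
  · refine C.opNorm_le_bound (offDiag B C).opNorm_nonneg fun y => ?_
    calc ‖C y‖ = ‖(offDiag B C (WithLp.toLp 2 (y, 0))).snd‖ := rfl
      _ ≤ ‖offDiag B C (WithLp.toLp 2 (y, 0))‖ := by apply WithLp.norm_snd_le
      _ ≤ ‖offDiag B C‖ * ‖y‖ := by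
        simpa only [WithLp.norm_toLp_fst] using (offDiag B C).le_opNorm (WithLp.toLp 2 (y, 0))

end OffDiag

lemma opAbs_eq_abs (T : H →L[ℂ] H) : opAbs T = CFC.abs T := rfl

theorem stmt_8 (B C : H →L[ℂ] H) (h1 : opAbs B * opAbs (adjoint C) = 0)
    (h2 : opAbs (adjoint B) * opAbs C = 0) :
    numRadius (offDiag B C) ^ 2 =
      (1 / 4) * max ‖opAbs B ^ 2 + opAbs (adjoint C) ^ 2‖ ‖opAbs (adjoint B) ^ 2 + opAbs C ^ 2‖ := by
  simp only [opAbs_eq_abs, CFC.abs_sq, ← star_eq_adjoint, star_star] at h1 h2 ⊢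
  have hBC : B * C = 0 := by
    rw [← norm_eq_zero, norm_mul_eq_norm_abs_mul_abs_star, h1, norm_zero]
  have hCB : star B * star C = 0 := by
    rw [← norm_eq_zero, norm_mul_eq_norm_abs_mul_abs_star, star_star, h2, norm_zero]
  have hT : offDiag B C * offDiag B C = 0 := offDiag_mul_self hBC (by simpa using congr(star $hCB))
  have hsum₂ := norm_star_mul_self_add_mul_star_self hCB
  simp only [star_star, norm_star] at hsum₂
  rw [numRadius_eq_half_opNorm_of_mul_self_eq_zero hT, norm_offDiag,
    norm_star_mul_self_add_mul_star_self hBC, hsum₂, max_self]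
  ring
end
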